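/- Let Q ∈ S₀ with Q ≠ 0, and label its eigenvalues λ₁ ≥ λ₂ ≥ λ₃. If s ≥ 0, r ∈ [0,1] and an orthonormal pair n, m ∈ ℝ³ satisfy Q = s( n⊗n − (1/3)Id + r( m⊗m − (1/3)Id ) ), then s = 2λ₁ + λ₂, r = (λ₁ + 2λ₂)/(2λ₁ + λ₂), and n, m are eigenvectors of Q associated with the eigenvalues λ₁ and λ₂ respectively. -/
import Mathlib


open Matrix

noncomputable section

abbrev M3 : Type := Matrix (Fin 3) (Fin 3) ℝ

lemma cols (v0 v1 v2 : Fin 3 → ℝ)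
    (h00 : (∑ i, v0 i * v0 i) = 1) (h11 : (∑ i, v1 i * v1 i) = 1)
    (h22 : (∑ i, v2 i * v2 i) = 1) (h01 : (∑ i, v0 i * v1 i) = 0)
    (h02 : (∑ i, v0 i * v2 i) = 0) (h12 : (∑ i, v1 i * v2 i) = 0)
    (i j : Fin 3) :
    v0 i * v0 j + v1 i * v1 j + v2 i * v2 j = if i = j then 1 else 0 := by
  simp only [Fin.sum_univ_three] at h00 h11 h22 h01 h02 h12
  have hE : (Matrix.of ![v0, v1, v2]) * (Matrix.of ![v0, v1, v2])ᵀ = 1 := by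
    ext a b
    fin_cases a <;> fin_cases b <;>
      simp [Matrix.mul_apply, Matrix.transpose_apply, Fin.sum_univ_three, Matrix.one_apply,
        Matrix.vecHead, Matrix.vecTail] <;>
      first
        | linear_combination h00 | linear_combination h11 | linear_combination h22
        | linear_combination h01 | linear_combination h02 | linear_combination h12
  have hE' := mul_eq_one_comm.mp hE
  have h : ((Matrix.of ![v0, v1, v2])ᵀ * (Matrix.of ![v0, v1, v2])) i j = (1 : M3) i j := by
    rw [hE']
  simpa [Matrix.mul_apply, Matrix.transpose_apply, Fin.sum_univ_three, Matrix.one_apply] using h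

lemma rayleigh (Q : M3) (v0 v1 v2 : Fin 3 → ℝ) (a0 a1 a2 : ℝ)
    (h00 : (∑ i, v0 i * v0 i) = 1) (h11 : (∑ i, v1 i * v1 i) = 1)
    (h22 : (∑ i, v2 i * v2 i) = 1) (h01 : (∑ i, v0 i * v1 i) = 0)
    (h02 : (∑ i, v0 i * v2 i) = 0) (h12 : (∑ i, v1 i * v2 i) = 0)
    (he0 : Q.mulVec v0 = a0 • v0) (he1 : Q.mulVec v1 = a1 • v1)
    (he2 : Q.mulVec v2 = a2 • v2) (w : Fin 3 → ℝ) :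
    (∑ i, (Q.mulVec w) i * w i)
      = a0 * (∑ i, w i * v0 i)^2 + a1 * (∑ i, w i * v1 i)^2 + a2 * (∑ i, w i * v2 i)^2
    ∧ (∑ i, w i * w i)
      = (∑ i, w i * v0 i)^2 + (∑ i, w i * v1 i)^2 + (∑ i, w i * v2 i)^2 := by
  have hcol := cols v0 v1 v2 h00 h11 h22 h01 h02 h12
  set c0 := ∑ i, w i * v0 i with hc0
  set c1 := ∑ i, w i * v1 i with hc1
  set c2 := ∑ i, w i * v2 i with hc2
  have hw : ∀ i, w i = c0 * v0 i + c1 * v1 i + c2 * v2 i := by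
    intro i
    have hi : i = 0 ∨ i = 1 ∨ i = 2 := by omega
    have H0 := hcol 0 i; have H1 := hcol 1 i; have H2 := hcol 2 i
    rw [hc0, hc1, hc2]
    rcases hi with rfl | rfl | rfl <;> simp at H0 H1 H2 <;> simp only [Fin.sum_univ_three] <;>
      linear_combination (-(w 0)) * H0 - w 1 * H1 - w 2 * H2
  have hQ0 : ∀ i, (∑ j, Q i j * v0 j) = a0 * v0 i := by
    intro i
    have := congrFun he0 i
    simpa [Matrix.mulVec, dotProduct] using this
  have hQ1 : ∀ i, (∑ j, Q i j * v1 j) = a1 * v1 i := by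
    intro i
    have := congrFun he1 i
    simpa [Matrix.mulVec, dotProduct] using this
  have hQ2 : ∀ i, (∑ j, Q i j * v2 j) = a2 * v2 i := by
    intro i
    have := congrFun he2 i
    simpa [Matrix.mulVec, dotProduct] using this
  have hQw : ∀ i, (Q.mulVec w) i = c0 * (a0 * v0 i) + c1 * (a1 * v1 i) + c2 * (a2 * v2 i) := by
    intro i
    have g0 := hQ0 i; have g1 := hQ1 i; have g2 := hQ2 i
    simp only [Fin.sum_univ_three] at g0 g1 g2
    simp only [Matrix.mulVec, dotProduct, Fin.sum_univ_three]
    rw [hw 0, hw 1, hw 2]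
    linear_combination c0 * g0 + c1 * g1 + c2 * g2
  simp only [Fin.sum_univ_three] at h00 h11 h22 h01 h02 h12 ⊢
  rw [hQw 0, hQw 1, hQw 2, hw 0, hw 1, hw 2]
  constructor
  · linear_combination (a0*c0^2)*h00 + (a1*c1^2)*h11 + (a2*c2^2)*h22
      + ((a0+a1)*c0*c1)*h01 + ((a0+a2)*c0*c2)*h02 + ((a1+a2)*c1*c2)*h12
  · linear_combination c0^2*h00 + c1^2*h11 + c2^2*h22
      + (2*c0*c1)*h01 + (2*c0*c2)*h02 + (2*c1*c2)*h12

lemma tracesum (Q : M3) (v0 v1 v2 : Fin 3 → ℝ) (a0 a1 a2 : ℝ)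
    (h00 : (∑ i, v0 i * v0 i) = 1) (h11 : (∑ i, v1 i * v1 i) = 1)
    (h22 : (∑ i, v2 i * v2 i) = 1) (h01 : (∑ i, v0 i * v1 i) = 0)
    (h02 : (∑ i, v0 i * v2 i) = 0) (h12 : (∑ i, v1 i * v2 i) = 0)
    (he0 : Q.mulVec v0 = a0 • v0) (he1 : Q.mulVec v1 = a1 • v1)
    (he2 : Q.mulVec v2 = a2 • v2) :
    a0 + a1 + a2 = Q.trace := by
  have hcol := cols v0 v1 v2 h00 h11 h22 h01 h02 h12
  have hQ0 : ∀ i, (∑ j, Q i j * v0 j) = a0 * v0 i := fun i => by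
    simpa [Matrix.mulVec, dotProduct] using congrFun he0 i
  have hQ1 : ∀ i, (∑ j, Q i j * v1 j) = a1 * v1 i := fun i => by
    simpa [Matrix.mulVec, dotProduct] using congrFun he1 i
  have hQ2 : ∀ i, (∑ j, Q i j * v2 j) = a2 * v2 i := fun i => by
    simpa [Matrix.mulVec, dotProduct] using congrFun he2 i
  have ha0 : a0 = ∑ i, (∑ j, Q i j * v0 j) * v0 i := by
    simp only [hQ0]
    simp only [Fin.sum_univ_three] at h00 ⊢
    linear_combination (-a0) * h00
  have ha1 : a1 = ∑ i, (∑ j, Q i j * v1 j) * v1 i := by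
    simp only [hQ1]
    simp only [Fin.sum_univ_three] at h11 ⊢
    linear_combination (-a1) * h11
  have ha2 : a2 = ∑ i, (∑ j, Q i j * v2 j) * v2 i := by
    simp only [hQ2]
    simp only [Fin.sum_univ_three] at h22 ⊢
    linear_combination (-a2) * h22
  rw [ha0, ha1, ha2, Matrix.trace]
  have C00 := hcol 0 0; have C11 := hcol 1 1; have C22 := hcol 2 2
  have C01 := hcol 0 1; have C10 := hcol 1 0; have C02 := hcol 0 2
  have C20 := hcol 2 0; have C12 := hcol 1 2; have C21 := hcol 2 1
  simp at C00 C11 C22 C01 C10 C02 C20 C12 C21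
  simp only [Fin.sum_univ_three, Matrix.diag]
  linear_combination Q 0 0 * C00 + Q 1 1 * C11 + Q 2 2 * C22
    + Q 0 1 * C10 + Q 1 0 * C01 + Q 0 2 * C20 + Q 2 0 * C02
    + Q 1 2 * C21 + Q 2 1 * C12

lemma repVec (s r : ℝ) (n m v : Fin 3 → ℝ) :
    (s • (vecMulVec n n - (1/3 : ℝ) • (1 : M3)
        + r • (vecMulVec m m - (1/3 : ℝ) • (1 : M3)))).mulVec v
    = fun i => s * (∑ j, n j * v j) * n i + s * r * (∑ j, m j * v j) * m i
        - s * (1 + r) / 3 * v i := by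
  funext i
  have hi : i = 0 ∨ i = 1 ∨ i = 2 := by omega
  rcases hi with rfl | rfl | rfl <;>
    simp [Matrix.mulVec, dotProduct, Fin.sum_univ_three, vecMulVec, Matrix.one_apply,
      Matrix.smul_apply, Matrix.sub_apply, Matrix.add_apply] <;> ring

lemma cmp_max (a0 a1 a2 b x0 x1 x2 : ℝ) (h1 : a1 ≤ a0) (h2 : a2 ≤ a0)
    (hx0 : 0 ≤ x0) (hx1 : 0 ≤ x1) (hx2 : 0 ≤ x2)
    (hA : b = a0 * x0 + a1 * x1 + a2 * x2) (hB : 1 = x0 + x1 + x2) : b ≤ a0 := by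
  have p1 := mul_nonneg (sub_nonneg.2 h1) hx1
  have p2 := mul_nonneg (sub_nonneg.2 h2) hx2
  have hb : a0 = a0 * x0 + a0 * x1 + a0 * x2 := by linear_combination a0 * hB
  nlinarith [p1, p2, hb]

lemma cmp_min (a0 a1 a2 b x0 x1 x2 : ℝ) (h1 : a2 ≤ a0) (h2 : a2 ≤ a1)
    (hx0 : 0 ≤ x0) (hx1 : 0 ≤ x1) (hx2 : 0 ≤ x2)
    (hA : b = a0 * x0 + a1 * x1 + a2 * x2) (hB : 1 = x0 + x1 + x2) : a2 ≤ b := by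
  have p1 := mul_nonneg (sub_nonneg.2 h1) hx0
  have p2 := mul_nonneg (sub_nonneg.2 h2) hx1
  have hb : a2 = a2 * x0 + a2 * x1 + a2 * x2 := by linear_combination a2 * hB
  nlinarith [p1, p2, hb]

lemma valfun (v : Fin 3 → ℝ) (a : ℝ) (hv : (∑ i, v i * v i) = 1) :
    (∑ i, (a • v) i * v i) = a := by
  simp only [Pi.smul_apply, smul_eq_mul, Fin.sum_univ_three] at hv ⊢
  linear_combination a * hv

set_option maxHeartbeats 1000000 in
/-- Uniqueness of the parameters in the representation formula: if the eigenvalues of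
the nonzero symmetric traceless matrix Q are λ₁ ≥ λ₂ ≥ λ₃ (with an orthonormal basis
of eigenvectors e₀, e₁, e₂), and Q = s( n⊗n − (1/3)Id + r( m⊗m − (1/3)Id ) ) with
s ≥ 0, r ∈ [0,1] and (n, m) orthonormal, then s = 2λ₁ + λ₂,
r = (λ₁ + 2λ₂)/(2λ₁ + λ₂), and n, m are eigenvectors for λ₁, λ₂ respectively. -/
theorem stmt2 (Q : M3) (hsymm : Qᵀ = Q) (htr : Q.trace = 0) (hQ : Q ≠ 0)
    (l1 l2 l3 : ℝ) (hl12 : l2 ≤ l1) (hl23 : l3 ≤ l2)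
    (e : Fin 3 → Fin 3 → ℝ)
    (he_unit : ∀ i, (∑ k, e i k ^ 2) = 1)
    (he_orth : ∀ i j, i ≠ j → (∑ k, e i k * e j k) = 0)
    (heig1 : Q.mulVec (e 0) = l1 • e 0)
    (heig2 : Q.mulVec (e 1) = l2 • e 1)
    (heig3 : Q.mulVec (e 2) = l3 • e 2)
    (s r : ℝ) (hs : 0 ≤ s) (hr0 : 0 ≤ r) (hr1 : r ≤ 1)
    (n m : Fin 3 → ℝ)
    (hn : (∑ i, n i ^ 2) = 1) (hm : (∑ i, m i ^ 2) = 1) (hnm : (∑ i, n i * m i) = 0)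
    (hrep : Q = s • (vecMulVec n n - (1/3 : ℝ) • (1 : M3)
            + r • (vecMulVec m m - (1/3 : ℝ) • (1 : M3)))) :
    s = 2 * l1 + l2 ∧ r = (l1 + 2 * l2) / (2 * l1 + l2) ∧
      Q.mulVec n = l1 • n ∧ Q.mulVec m = l2 • m := by
  have hn' : (∑ i, n i * n i) = 1 := by simpa [sq] using hn
  have hm' : (∑ i, m i * m i) = 1 := by simpa [sq] using hm
  have hmn : (∑ i, m i * n i) = 0 := by
    rw [← hnm]; exact Finset.sum_congr rfl (fun i _ => mul_comm _ _)
  have e00 : (∑ k, e 0 k * e 0 k) = 1 := by simpa [sq] using he_unit 0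
  have e11 : (∑ k, e 1 k * e 1 k) = 1 := by simpa [sq] using he_unit 1
  have e22 : (∑ k, e 2 k * e 2 k) = 1 := by simpa [sq] using he_unit 2
  have e01 := he_orth 0 1 (by decide)
  have e02 := he_orth 0 2 (by decide)
  have e12 := he_orth 1 2 (by decide)
  -- the third vector completing n, m to an orthonormal basis
  set p : Fin 3 → ℝ := ![n 1 * m 2 - n 2 * m 1, n 2 * m 0 - n 0 * m 2, n 0 * m 1 - n 1 * m 0]
    with hpdef
  have hp0 : p 0 = n 1 * m 2 - n 2 * m 1 := rfl
  have hp1 : p 1 = n 2 * m 0 - n 0 * m 2 := rfl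
  have hp2 : p 2 = n 0 * m 1 - n 1 * m 0 := rfl
  have hnE : n 0 * n 0 + n 1 * n 1 + n 2 * n 2 = 1 := by
    simpa [Fin.sum_univ_three] using hn'
  have hmE : m 0 * m 0 + m 1 * m 1 + m 2 * m 2 = 1 := by
    simpa [Fin.sum_univ_three] using hm'
  have hnmE : n 0 * m 0 + n 1 * m 1 + n 2 * m 2 = 0 := by
    simpa [Fin.sum_univ_three] using hnm
  have hpp : (∑ i, p i * p i) = 1 := by
    simp only [Fin.sum_univ_three, hp0, hp1, hp2]
    linear_combination (m 0 * m 0 + m 1 * m 1 + m 2 * m 2) * hnE + hmE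
      - (n 0 * m 0 + n 1 * m 1 + n 2 * m 2) * hnmE
  have hnp : (∑ i, n i * p i) = 0 := by
    simp only [Fin.sum_univ_three, hp0, hp1, hp2]; ring
  have hmp : (∑ i, m i * p i) = 0 := by
    simp only [Fin.sum_univ_three, hp0, hp1, hp2]; ring
  -- eigenvalue equations for n, m, p
  have hQn : Q.mulVec n = (s * (2 - r) / 3) • n := by
    rw [hrep, repVec]
    funext i
    simp only [Pi.smul_apply, smul_eq_mul, hn', hmn]
    ring
  have hQm : Q.mulVec m = (s * (2 * r - 1) / 3) • m := by
    rw [hrep, repVec]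
    funext i
    simp only [Pi.smul_apply, smul_eq_mul, hnm, hm']
    ring
  have hQp : Q.mulVec p = (-(s * (1 + r)) / 3) • p := by
    rw [hrep, repVec]
    funext i
    simp only [Pi.smul_apply, smul_eq_mul, hnp, hmp]
    ring
  -- Rayleigh quotient comparisons
  have hval_n : (∑ i, (Q.mulVec n) i * n i) = s * (2 - r) / 3 := by
    rw [hQn]; exact valfun n _ hn'
  have hval_p : (∑ i, (Q.mulVec p) i * p i) = -(s * (1 + r)) / 3 := by
    rw [hQp]; exact valfun p _ hpp
  have hval_e0 : (∑ i, (Q.mulVec (e 0)) i * e 0 i) = l1 := by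
    rw [heig1]; exact valfun (e 0) _ e00
  have hval_e2 : (∑ i, (Q.mulVec (e 2)) i * e 2 i) = l3 := by
    rw [heig3]; exact valfun (e 2) _ e22
  obtain ⟨An, Bn⟩ := rayleigh Q (e 0) (e 1) (e 2) l1 l2 l3 e00 e11 e22 e01 e02 e12
    heig1 heig2 heig3 n
  obtain ⟨Ap, Bp⟩ := rayleigh Q (e 0) (e 1) (e 2) l1 l2 l3 e00 e11 e22 e01 e02 e12
    heig1 heig2 heig3 p
  obtain ⟨Ae0, Be0⟩ := rayleigh Q n m p (s * (2 - r) / 3) (s * (2 * r - 1) / 3)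
    (-(s * (1 + r)) / 3) hn' hm' hpp hnm hnp hmp hQn hQm hQp (e 0)
  obtain ⟨Ae2, Be2⟩ := rayleigh Q n m p (s * (2 - r) / 3) (s * (2 * r - 1) / 3)
    (-(s * (1 + r)) / 3) hn' hm' hpp hnm hnp hmp hQn hQm hQp (e 2)
  rw [hval_n] at An
  rw [hn'] at Bn
  rw [hval_p] at Ap
  rw [hpp] at Bp
  rw [hval_e0] at Ae0
  rw [e00] at Be0
  rw [hval_e2] at Ae2
  rw [e22] at Be2
  have hl13 : l3 ≤ l1 := le_trans hl23 hl12
  have hmu12 : s * (2 * r - 1) / 3 ≤ s * (2 - r) / 3 := by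
    have := mul_nonneg hs (sub_nonneg.2 hr1); linarith
  have hmu23 : -(s * (1 + r)) / 3 ≤ s * (2 * r - 1) / 3 := by
    have := mul_nonneg hs hr0; linarith
  have hmu13 : -(s * (1 + r)) / 3 ≤ s * (2 - r) / 3 := le_trans hmu23 hmu12
  have hl1 : l1 = s * (2 - r) / 3 := by
    have h1 : s * (2 - r) / 3 ≤ l1 :=
      cmp_max l1 l2 l3 _ _ _ _ hl12 hl13 (sq_nonneg _) (sq_nonneg _) (sq_nonneg _) An Bn
    have h2 : l1 ≤ s * (2 - r) / 3 :=
      cmp_max _ _ _ l1 _ _ _ hmu12 hmu13 (sq_nonneg _) (sq_nonneg _) (sq_nonneg _) Ae0 Be0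
    linarith
  have hl3 : l3 = -(s * (1 + r)) / 3 := by
    have h1 : l3 ≤ -(s * (1 + r)) / 3 :=
      cmp_min l1 l2 l3 _ _ _ _ hl13 hl23 (sq_nonneg _) (sq_nonneg _) (sq_nonneg _) Ap Bp
    have h2 : -(s * (1 + r)) / 3 ≤ l3 :=
      cmp_min _ _ _ l3 _ _ _ hmu13 hmu23 (sq_nonneg _) (sq_nonneg _) (sq_nonneg _) Ae2 Be2
    linarith
  have hsum : l1 + l2 + l3 = 0 := by
    have h := tracesum Q (e 0) (e 1) (e 2) l1 l2 l3 e00 e11 e22 e01 e02 e12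
      heig1 heig2 heig3
    rw [htr] at h; exact h
  have hl2 : l2 = s * (2 * r - 1) / 3 := by linarith
  have hseq : s = 2 * l1 + l2 := by linarith
  have hsne : s ≠ 0 := by
    intro h
    apply hQ
    rw [hrep, h, zero_smul]
  refine ⟨hseq, ?_, ?_, ?_⟩
  · have hnum : l1 + 2 * l2 = s * r := by linarith
    rw [← hseq, hnum, mul_comm, mul_div_assoc, div_self hsne, mul_one]
  · rw [hl1]; exact hQn
  · rw [hl2]; exact hQm
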